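/- arXiv:2209.09150 — 6 statements merged into one kernel-verified Lean document; each statement's English description precedes it below -/
import Mathlib

section
/- Let α, β ∈ ℂ with α ≠ 0 and β ≠ 0. The Poisson algebras P₃,₄^α and P₃,₄^β are isomorphic if and only if α = β or α = 1/β. -/
open scoped BigOperators

/-- The bilinear map on `Fin n → ℂ` determined by structure constants `c`. -/
noncomputable def sb {n : ℕ} (c : Fin n → Fin n → Fin n → ℂ) :
    (Fin n → ℂ) →ₗ[ℂ] (Fin n → ℂ) →ₗ[ℂ] (Fin n → ℂ) :=
  LinearMap.mk₂ ℂ (fun x y k => ∑ a, ∑ b, c a b k * (x a * y b))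
    (fun x x' y => by
      funext k
      simp [add_mul, mul_add, Finset.sum_add_distrib])
    (fun r x y => by
      funext k
      simp only [Pi.smul_apply, smul_eq_mul, Finset.mul_sum]
      exact Finset.sum_congr rfl fun a _ => Finset.sum_congr rfl fun b _ => by ring)
    (fun x y y' => by
      funext k
      simp [mul_add, Finset.sum_add_distrib])
    (fun r x y => by
      funext k
      simp only [Pi.smul_apply, smul_eq_mul, Finset.mul_sum]
      exact Finset.sum_congr rfl fun a _ => Finset.sum_congr rfl fun b _ => by ring)

/-- Isomorphism of Poisson algebra structures on `Fin 3 → ℂ`. -/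
def Iso33 (m b m' b' : (Fin 3 → ℂ) →ₗ[ℂ] (Fin 3 → ℂ) →ₗ[ℂ] (Fin 3 → ℂ)) : Prop :=
  ∃ φ : (Fin 3 → ℂ) ≃ₗ[ℂ] (Fin 3 → ℂ),
    (∀ x y, φ (m x y) = m' (φ x) (φ y)) ∧ (∀ x y, φ (b x y) = b' (φ x) (φ y))

/-- Structure constants of the bracket of `P₃,₄^α`: {e₁,e₂}=e₂, {e₁,e₃}=α e₃. -/
def cb4 (α : ℂ) : Fin 3 → Fin 3 → Fin 3 → ℂ :=
  ![![![0,0,0],![0,1,0],![0,0,α]], ![![0,-1,0],![0,0,0],![0,0,0]], ![![0,0,-α],![0,0,0],![0,0,0]]]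

/-!
The derived algebra of `P₃,₄^α` is `span {e₂, e₃}`, on which `ad e₁` acts diagonally with
eigenvalues `1` and `α`. An isomorphism `φ : P₃,₄^α → P₃,₄^β` therefore makes `φ e₂, φ e₃`
independent eigenvectors of `ad (φ e₁)` for the eigenvalues `1, α`; but in `P₃,₄^β` this operator
acts on `span {e₂, e₃}` as `diag (c, β c)`, `c` being the `e₁`-coordinate of `φ e₁`. So
`{1, α} = {c, β c}`, i.e. `α = β` or `α β = 1`. Conversely, when `α β = 1` the map
`e₁ ↦ α e₁, e₂ ↦ e₃, e₃ ↦ e₂` is an isomorphism.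
-/

lemma sb_cb4_apply (γ : ℂ) (x y : Fin 3 → ℂ) :
    sb (cb4 γ) x y = ![0, x 0 * y 1 - x 1 * y 0, γ * (x 0 * y 2 - x 2 * y 0)] := by
  funext k
  fin_cases k <;> simp [sb, cb4, Fin.sum_univ_three] <;> ring

noncomputable def scaleSwap (c : ℂ) (hc : c ≠ 0) : (Fin 3 → ℂ) ≃ₗ[ℂ] (Fin 3 → ℂ) where
  toFun x := ![c * x 0, x 2, x 1]
  invFun x := ![c⁻¹ * x 0, x 2, x 1]
  map_add' x y := by funext k; fin_cases k <;> simp [mul_add]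
  map_smul' r x := by funext k; fin_cases k <;> simp [mul_left_comm]
  left_inv x := by funext k; fin_cases k <;> simp [hc]
  right_inv x := by funext k; fin_cases k <;> simp [hc]

lemma scaleSwap_bracket {α β : ℂ} (hα : α ≠ 0) (hαβ : α * β = 1) (x y : Fin 3 → ℂ) :
    scaleSwap α hα (sb (cb4 α) x y) = sb (cb4 β) (scaleSwap α hα x) (scaleSwap α hα y) := by
  simp only [scaleSwap, LinearEquiv.coe_mk, LinearMap.coe_mk, AddHom.coe_mk, sb_cb4_apply]
  funext k
  fin_cases k <;> simp
  · ring
  · linear_combination (x 1 * y 0 - x 0 * y 1) * hαβ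

lemma iso33_of_mul_eq_one {α β : ℂ} (hα : α ≠ 0) (hαβ : α * β = 1) :
    Iso33 0 (sb (cb4 α)) 0 (sb (cb4 β)) :=
  ⟨scaleSwap α hα, fun x y => by simp, scaleSwap_bracket hα hαβ⟩

lemma eigenvector_ad {β c : ℂ} (hc : c ≠ 0) {p v : Fin 3 → ℂ} (h : c • v = sb (cb4 β) p v) :
    v 0 = 0 ∧ (c - p 0) * v 1 = 0 ∧ (c - β * p 0) * v 2 = 0 := by
  rw [sb_cb4_apply] at h
  have h0 : c * v 0 = 0 := by simpa using congrFun h 0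
  have h1 : c * v 1 = p 0 * v 1 - p 1 * v 0 := by simpa using congrFun h 1
  have h2 : c * v 2 = β * (p 0 * v 2 - p 2 * v 0) := by simpa using congrFun h 2
  have hv0 : v 0 = 0 := (mul_eq_zero.1 h0).resolve_left hc
  rw [hv0] at h1 h2
  exact ⟨hv0, by linear_combination h1, by linear_combination h2⟩

lemma det_ne_zero_of_linearIndependent {K : Type*} [Field K] {q r : Fin 3 → K}
    (hq : q 0 = 0) (hr : r 0 = 0) (hqr : LinearIndependent K ![q, r]) :
    q 1 * r 2 - q 2 * r 1 ≠ 0 := by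
  intro hdet
  have hpair := LinearIndependent.pair_iff.1 hqr
  obtain ⟨-, hq2⟩ := hpair (r 2) (-q 2) <| by
    funext k
    fin_cases k
    · simp [hq, hr]
    · simp; linear_combination hdet
    · simp; ring
  obtain ⟨-, hq1⟩ := hpair (r 1) (-q 1) <| by
    funext k
    fin_cases k
    · simp [hq, hr]
    · simp; ring
    · simp; linear_combination -hdet
  have hq_zero : q = 0 := funext fun k => by
    fin_cases k <;> simp [hq, neg_eq_zero.1 hq1, neg_eq_zero.1 hq2]
  exact hqr.ne_zero 0 (by simpa using hq_zero)

lemma diag_eigenvalues_eq {K : Type*} [Field K] {a b c d q₁ q₂ r₁ r₂ : K}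
    (hdet : q₁ * r₂ - q₂ * r₁ ≠ 0) (hq₁ : (c - a) * q₁ = 0) (hq₂ : (c - b) * q₂ = 0)
    (hr₁ : (d - a) * r₁ = 0) (hr₂ : (d - b) * r₂ = 0) :
    (a = c ∧ b = d) ∨ (a = d ∧ b = c) := by
  have eq_of {x y z : K} (h : (x - y) * z = 0) (hz : z ≠ 0) : y = x :=
    (sub_eq_zero.1 ((mul_eq_zero.1 h).resolve_right hz)).symm
  by_cases h : q₁ * r₂ = 0
  · have : q₂ * r₁ ≠ 0 := fun h' => hdet (by rw [h, h', sub_zero])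
    obtain ⟨hq₂', hr₁'⟩ := mul_ne_zero_iff.1 this
    exact Or.inr ⟨eq_of hr₁ hr₁', eq_of hq₂ hq₂'⟩
  · obtain ⟨hq₁', hr₂'⟩ := mul_ne_zero_iff.1 h
    exact Or.inl ⟨eq_of hq₁ hq₁', eq_of hr₂ hr₂'⟩

lemma linearIndependent_e₂_e₃ : LinearIndependent ℂ ![(![0, 1, 0] : Fin 3 → ℂ), ![0, 0, 1]] :=
  LinearIndependent.pair_iff.2 fun s t h => by
    simpa using And.intro (congrFun h 1) (congrFun h 2)

/-- For nonzero α, β : `P₃,₄^α ≅ P₃,₄^β` iff `α = β` or `α = 1/β`. -/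
theorem stmt2 (α β : ℂ) (hα : α ≠ 0) (hβ : β ≠ 0) :
    Iso33 0 (sb (cb4 α)) 0 (sb (cb4 β)) ↔ (α = β ∨ α = 1 / β) := by
  constructor
  · rintro ⟨φ, -, hφ⟩
    set p := φ ![1, 0, 0]
    have hq : (1 : ℂ) • φ ![0, 1, 0] = sb (cb4 β) p (φ ![0, 1, 0]) := by
      rw [one_smul, ← hφ, sb_cb4_apply]
      congr 1; funext k; fin_cases k <;> simp
    have hr : α • φ ![0, 0, 1] = sb (cb4 β) p (φ ![0, 0, 1]) := by
      rw [← map_smul, ← hφ, sb_cb4_apply]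
      congr 1; funext k; fin_cases k <;> simp
    obtain ⟨hq₀, hq₁, hq₂⟩ := eigenvector_ad one_ne_zero hq
    obtain ⟨hr₀, hr₁, hr₂⟩ := eigenvector_ad hα hr
    have hind : LinearIndependent ℂ ![φ ![0, 1, 0], φ ![0, 0, 1]] :=
      LinearIndependent.pair_iff.2 fun s t h => LinearIndependent.pair_iff.1
        linearIndependent_e₂_e₃ s t (φ.map_eq_zero_iff.1 (by rwa [map_add, map_smul, map_smul]))
    rcases diag_eigenvalues_eq (det_ne_zero_of_linearIndependent hq₀ hr₀ hind) hq₁ hq₂ hr₁ hr₂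
      with ⟨hp, hβp⟩ | ⟨hp, hβp⟩
    · left; rw [← hβp, hp, mul_one]
    · right; rw [eq_div_iff hβ, ← hp, mul_comm, hβp]
  · rintro (rfl | rfl)
    · exact ⟨LinearEquiv.refl ℂ _, fun _ _ => rfl, fun _ _ => rfl⟩
    · exact iso33_of_mul_eq_one hα (one_div_mul_cancel hβ)
end

section
/- Let α, β ∈ ℂ. The Poisson algebras P₃,₁₆^α and P₃,₁₆^β are isomorphic if and only if α² = β². -/
open scoped BigOperators

/-- Structure constants of the multiplication of `P₃,₁₆^α`: e₁·e₂ = e₂·e₁ = e₃. -/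
def cm16 : Fin 3 → Fin 3 → Fin 3 → ℂ :=
  ![![![0,0,0],![0,0,1],![0,0,0]], ![![0,0,1],![0,0,0],![0,0,0]], ![![0,0,0],![0,0,0],![0,0,0]]]

/-- Structure constants of the bracket of `P₃,₁₆^α`: {e₁,e₂} = α e₃. -/
def cb16 (α : ℂ) : Fin 3 → Fin 3 → Fin 3 → ℂ :=
  ![![![0,0,0],![0,0,α],![0,0,0]], ![![0,0,-α],![0,0,0],![0,0,0]], ![![0,0,0],![0,0,0],![0,0,0]]]

lemma sbm_eq (x y : Fin 3 → ℂ) :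
    sb cm16 x y = ![0, 0, x 0 * y 1 + x 1 * y 0] := by
  funext k
  fin_cases k <;>
    simp [sb, cm16, Fin.sum_univ_three, LinearMap.mk₂_apply, Matrix.vecHead, Matrix.vecTail]

lemma sbb_eq (α : ℂ) (x y : Fin 3 → ℂ) :
    sb (cb16 α) x y = ![0, 0, α * (x 0 * y 1) - α * (x 1 * y 0)] := by
  funext k
  fin_cases k <;>
    simp [sb, cb16, Fin.sum_univ_three, LinearMap.mk₂_apply, Matrix.vecHead, Matrix.vecTail, sub_eq_add_neg]

/-- The coordinate-swap linear equivalence. -/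
noncomputable def sw : (Fin 3 → ℂ) ≃ₗ[ℂ] (Fin 3 → ℂ) :=
  LinearEquiv.funCongrLeft ℂ ℂ (Equiv.swap 0 1)

lemma sw_apply (x : Fin 3 → ℂ) (k : Fin 3) : sw x k = x (Equiv.swap 0 1 k) := rfl

/-- `P₃,₁₆^α ≅ P₃,₁₆^β` iff `α² = β²`. -/
theorem stmt3 (α β : ℂ) :
    Iso33 (sb cm16) (sb (cb16 α)) (sb cm16) (sb (cb16 β)) ↔ α ^ 2 = β ^ 2 := by
  constructor
  · rintro ⟨φ, hm, hb⟩
    set e1 : Fin 3 → ℂ := ![1, 0, 0] with he1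
    set e2 : Fin 3 → ℂ := ![0, 1, 0] with he2
    have hz0 : (![(0:ℂ), 0, 0] : Fin 3 → ℂ) = 0 := by
      funext k; fin_cases k <;> simp
    set u := φ e1 with hu
    set v := φ e2 with hv
    -- u 0 * u 1 = 0
    have h1 : u 0 * u 1 + u 1 * u 0 = 0 := by
      have := congrFun (hm e1 e1) 2
      rw [sbm_eq, sbm_eq] at this
      simpa [he1, hz0] using this.symm
    have h2 : v 0 * v 1 + v 1 * v 0 = 0 := by
      have := congrFun (hm e2 e2) 2
      rw [sbm_eq, sbm_eq] at this
      simpa [he2, hz0] using this.symm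
    have hu01 : u 0 * u 1 = 0 := by linear_combination h1 / 2
    have hv01 : v 0 * v 1 = 0 := by linear_combination h2 / 2
    set p := u 0 * v 1 with hp
    set q := u 1 * v 0 with hq
    have hpq : p * q = 0 := by
      have : p * q = (u 0 * u 1) * (v 0 * v 1) := by rw [hp, hq]; ring
      rw [this, hu01, zero_mul]
    -- φ e3 = ![0,0,p+q]
    have he3 : φ ![0, 0, 1] = ![0, 0, p + q] := by
      have h3 : sb cm16 e1 e2 = ![(0:ℂ), 0, 1] := by
        rw [sbm_eq]
        simp [he1, he2]
      have := hm e1 e2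
      rw [h3, sbm_eq] at this
      rw [this, hp, hq]
    -- the bracket equation
    have hbr : φ ![0, 0, α] = ![0, 0, β * p - β * q] := by
      have h4 : sb (cb16 α) e1 e2 = ![(0:ℂ), 0, α] := by
        rw [sbb_eq]
        simp [he1, he2]
      have := hb e1 e2
      rw [h4, sbb_eq] at this
      rw [this, hp, hq]
    have hsm : (![0, 0, α] : Fin 3 → ℂ) = α • ![0, 0, 1] := by
      funext k; fin_cases k <;> simp
    have hmain : α * (p + q) = β * p - β * q := by
      have := congrFun hbr 2
      rw [hsm, map_smul, he3] at this
      simpa using this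
    -- p + q ≠ 0
    have hne : p + q ≠ 0 := by
      intro h
      have hz : φ ![0, 0, 1] = 0 := by
        rw [he3]
        funext k; fin_cases k <;> simp [h]
      have : (![0, 0, 1] : Fin 3 → ℂ) = 0 := by
        simpa using congrArg φ.symm hz
      have := congrFun this 2
      simp at this
    have key : α ^ 2 * (p + q) ^ 2 = β ^ 2 * (p + q) ^ 2 := by
      linear_combination (α * (p + q) + β * (p - q)) * hmain - 4 * β ^ 2 * hpq
    exact mul_right_cancel₀ (pow_ne_zero 2 hne) key
  · intro h
    have hcases : β = α ∨ β = -α := by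
      have h0 : (β - α) * (β + α) = 0 := by linear_combination -h
      rcases mul_eq_zero.mp h0 with h' | h'
      · left; linear_combination h'
      · right; linear_combination h'
    rcases hcases with rfl | rfl
    · exact ⟨LinearEquiv.refl ℂ _, fun x y => rfl, fun x y => rfl⟩
    · refine ⟨sw, fun x y => ?_, fun x y => ?_⟩
      · funext k
        rw [sw_apply, sbm_eq, sbm_eq]
        fin_cases k <;> simp [sw_apply, Equiv.swap_apply_def] <;> ring
      · funext k
        rw [sw_apply, sbb_eq, sbb_eq]
        fin_cases k <;> simp [sw_apply, Equiv.swap_apply_def] <;> ring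
end

section
/- Let n > 3 and let (P,·) = μ₁,₁ⁿ. Then Z²(P,P) consists exactly of the maps θ of the form θ(x,y) = α·Δ₁,ₙ(x,y)·e_{n−1} + β·Δ₁,ₙ(x,y)·e_n for some α, β ∈ ℂ. -/
open scoped BigOperators

/-- The multiplication of the filiform algebra `μ₁,₁ⁿ`: with 1-based basis
`e₁,…,eₙ`, `e_i · e_j = e_{i+j}` for `2 ≤ i+j ≤ n−1`, `i,j ≤ n−1`, and all other
products of basis vectors are zero (0-based: `a+b+1 = k` and `k+2 ≤ n`). -/
noncomputable def mu11 (n : ℕ) : (Fin n → ℂ) →ₗ[ℂ] (Fin n → ℂ) →ₗ[ℂ] (Fin n → ℂ) :=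
  sb (fun a b k => if (a : ℕ) + (b : ℕ) + 1 = (k : ℕ) ∧ (k : ℕ) + 2 ≤ n then 1 else 0)

/-!
Since `e₁` generates `e₂, …, e_{n-1}` by multiplication, the Leibniz rule
`θ(x·y, z) = θ(x, z)·y + x·θ(y, z)` forces `θ(e_b, z) = 0` for `2 ≤ b ≤ n-1` as soon as `θ(e₁, z)`
lies in the annihilator `⟨e_{n-1}, eₙ⟩` of `μ₁,₁ⁿ`. This applies to `z = e₁`, then, by
skew-symmetry, to every `z = e_c` with `c ≤ n-1`, and to `z = eₙ`: from `e₁ eₙ = 0` the rule gives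
`e₁ · θ(eₙ, z) = 0`, so `θ(eₙ, z)` lies in the annihilator. Hence `θ(e_a, e_b)` vanishes unless
`{a, b} = {1, n}`, that is `θ = Δ₁,ₙ · θ(e₁, eₙ)` with `θ(e₁, eₙ) = α e_{n-1} + β eₙ`.

Conversely, such a `θ` takes values in the annihilator and vanishes on products, since `Δ₁,ₙ` only
reads the `e₁`- and `eₙ`-coordinates, which products lack; this gives the Leibniz rule. The Jacobi
identity becomes a polynomial identity in the coordinates once the `e₁`-coordinate of `θ` is zero.
-/

open Finset

section Mu11

variable {n : ℕ}

def SupportedOnLastTwo (w : Fin n → ℂ) : Prop :=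
  ∀ i : Fin n, (i : ℕ) + 3 ≤ n → w i = 0

theorem mu11_apply (x y : Fin n → ℂ) (k : Fin n) :
    mu11 n x y k = ∑ a : Fin n, ∑ b : Fin n,
      (if (a : ℕ) + b + 1 = k ∧ (k : ℕ) + 2 ≤ n then 1 else 0) * (x a * y b) :=
  rfl

theorem mu11_comm (x y : Fin n → ℂ) : mu11 n x y = mu11 n y x := by
  funext k
  rw [mu11_apply, mu11_apply, sum_comm]
  simp only [add_comm, mul_comm]

theorem mu11_apply_eq_zero (x y : Fin n → ℂ) (k : Fin n) (hk : (k : ℕ) = 0 ∨ n < k + 2) :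
    mu11 n x y k = 0 := by
  rw [mu11_apply]
  exact sum_eq_zero fun a _ => sum_eq_zero fun b _ => by rw [if_neg (by omega), zero_mul]

theorem mu11_eq_zero_of_left {x : Fin n → ℂ} (hx : SupportedOnLastTwo x) (y : Fin n → ℂ) :
    mu11 n x y = 0 := by
  funext k
  rw [mu11_apply, Pi.zero_apply]
  refine sum_eq_zero fun a _ => sum_eq_zero fun b _ => ?_
  split_ifs with h
  · rw [hx a (by omega), zero_mul, mul_zero]
  · rw [zero_mul]

theorem mu11_eq_zero_of_right (x : Fin n → ℂ) {y : Fin n → ℂ} (hy : SupportedOnLastTwo y) :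
    mu11 n x y = 0 := by
  rw [mu11_comm, mu11_eq_zero_of_left hy]

theorem mu11_single_zero_apply (h0 : 0 < n) (w : Fin n → ℂ) (k : Fin n) :
    mu11 n (Pi.single ⟨0, h0⟩ 1) w k =
      if h : 1 ≤ (k : ℕ) ∧ (k : ℕ) + 2 ≤ n then w ⟨k - 1, by omega⟩ else 0 := by
  rw [mu11_apply,
    sum_eq_single ⟨0, h0⟩ (fun a _ ha => by simp [Pi.single_eq_of_ne ha]) (by simp)]
  simp only [Pi.single_eq_same, one_mul, zero_add]
  split_ifs with h
  · rw [sum_eq_single ⟨k - 1, by omega⟩ (fun b _ hb => ?_) (by simp), if_pos ⟨by simp; omega, h.2⟩,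
      one_mul]
    rw [if_neg fun h' => hb (Fin.ext (show (b : ℕ) = k - 1 by omega)), zero_mul]
  · exact sum_eq_zero fun b _ => by rw [if_neg (by omega), zero_mul]

theorem mu11_single_zero_single (h0 : 0 < n) (b : ℕ) (hb : b + 3 ≤ n) :
    mu11 n (Pi.single ⟨0, h0⟩ 1) (Pi.single ⟨b, by omega⟩ 1) = Pi.single ⟨b + 1, by omega⟩ 1 := by
  funext k
  rw [mu11_single_zero_apply]
  simp only [Pi.single_apply, Fin.ext_iff]
  split_ifs <;> first | rfl | omega

theorem supportedOnLastTwo_single {i : Fin n} (hi : n ≤ (i : ℕ) + 2) (c : ℂ) :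
    SupportedOnLastTwo (Pi.single i c) :=
  fun j hj => by rw [Pi.single_apply, if_neg (by rintro rfl; omega)]

theorem SupportedOnLastTwo.eq_add (h : 2 ≤ n) {w : Fin n → ℂ} (hw : SupportedOnLastTwo w) :
    w = w ⟨n - 2, by omega⟩ • Pi.single ⟨n - 2, by omega⟩ 1 +
      w ⟨n - 1, by omega⟩ • Pi.single ⟨n - 1, by omega⟩ 1 := by
  funext k
  simp only [Pi.add_apply, Pi.smul_apply, Pi.single_apply, Fin.ext_iff, smul_eq_mul, mul_ite,
    mul_one, mul_zero]
  by_cases hk : (k : ℕ) + 3 ≤ n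
  · rw [hw k hk, if_neg (by omega), if_neg (by omega), add_zero]
  · obtain h | h : (k : ℕ) = n - 2 ∨ (k : ℕ) = n - 1 := by omega
    · rw [if_pos h, if_neg (by omega), add_zero, show k = ⟨n - 2, by omega⟩ from Fin.ext h]
    · rw [if_pos h, if_neg (by omega), zero_add, show k = ⟨n - 1, by omega⟩ from Fin.ext h]

end Mu11

section Delta

variable {n : ℕ} (h0 : 0 < n)

noncomputable def delta1n : (Fin n → ℂ) →ₗ[ℂ] (Fin n → ℂ) →ₗ[ℂ] ℂ :=
  (LinearMap.proj ⟨0, h0⟩).smulRight (LinearMap.proj ⟨n - 1, by omega⟩) -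
    (LinearMap.proj ⟨n - 1, by omega⟩).smulRight (LinearMap.proj ⟨0, h0⟩)

theorem delta1n_apply (x y : Fin n → ℂ) :
    delta1n h0 x y = x ⟨0, h0⟩ * y ⟨n - 1, by omega⟩ - x ⟨n - 1, by omega⟩ * y ⟨0, h0⟩ := by
  simp [delta1n]

theorem delta1n_swap (x y : Fin n → ℂ) : delta1n h0 y x = -delta1n h0 x y := by
  simp only [delta1n_apply]
  ring

theorem delta1n_single_single (i j : Fin n) :
    delta1n h0 (Pi.single i 1) (Pi.single j 1) =
      (if (i : ℕ) = 0 ∧ (j : ℕ) = n - 1 then 1 else 0) -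
        (if (i : ℕ) = n - 1 ∧ (j : ℕ) = 0 then 1 else 0) := by
  simp only [delta1n_apply, Pi.single_apply, Fin.ext_iff]
  split_ifs <;> first | omega | simp

end Delta

section Cocycle

variable {n : ℕ} {θ : (Fin n → ℂ) →ₗ[ℂ] (Fin n → ℂ) →ₗ[ℂ] (Fin n → ℂ)}

theorem apply_single_eq_zero_of_supportedOnLastTwo
    (hder : ∀ x y z, θ (mu11 n x y) z = mu11 n (θ x z) y + mu11 n x (θ y z))
    (h0 : 0 < n) {z : Fin n → ℂ} (hz : SupportedOnLastTwo (θ (Pi.single ⟨0, h0⟩ 1) z))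
    (i : Fin n) (hi1 : 1 ≤ (i : ℕ)) (hi2 : (i : ℕ) + 2 ≤ n) : θ (Pi.single i 1) z = 0 := by
  suffices ∀ b, 1 ≤ b → ∀ hb : b + 2 ≤ n, θ (Pi.single ⟨b, by omega⟩ 1) z = 0 from this i hi1 hi2
  intro b hb1
  induction b, hb1 using Nat.le_induction with
  | base =>
    intro hb
    rw [show (⟨1, _⟩ : Fin n) = ⟨0 + 1, by omega⟩ from rfl,
      ← mu11_single_zero_single h0 0 (by omega), hder, mu11_eq_zero_of_left hz,
      mu11_eq_zero_of_right _ hz, add_zero]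
  | succ b hb1 ih =>
    intro hb
    rw [← mu11_single_zero_single h0 b (by omega), hder, mu11_eq_zero_of_left hz,
      ih (by omega), map_zero, zero_add]

theorem apply_single_single_eq_zero (hskew : ∀ x y, θ x y = -θ y x)
    (hder : ∀ x y z, θ (mu11 n x y) z = mu11 n (θ x z) y + mu11 n x (θ y z))
    {i j : Fin n} (hi : (i : ℕ) + 2 ≤ n) (hj : (j : ℕ) + 2 ≤ n) :
    θ (Pi.single i 1) (Pi.single j 1) = 0 := by
  have h0 : 0 < n := by omega
  have of_single_zero : ∀ {k : Fin n}, (k : ℕ) + 2 ≤ n → ∀ z,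
      θ (Pi.single ⟨0, h0⟩ 1) z = 0 → θ (Pi.single k 1) z = 0 := by
    intro k hk z hz
    rcases Nat.eq_zero_or_pos k with hk0 | hk0
    · rwa [show k = ⟨0, h0⟩ from Fin.ext hk0]
    · exact apply_single_eq_zero_of_supportedOnLastTwo hder h0 (fun _ _ => by rw [hz]; rfl)
        k hk0 hk
  have hj0 : θ (Pi.single j 1) (Pi.single ⟨0, h0⟩ 1) = 0 :=
    of_single_zero hj _ (self_eq_neg.mp (hskew _ _))
  exact of_single_zero hi _ (by rw [hskew, hj0, neg_zero])

theorem supportedOnLastTwo_apply_single_last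
    (hder : ∀ x y z, θ (mu11 n x y) z = mu11 n (θ x z) y + mu11 n x (θ y z))
    (h0 : 0 < n) (z : Fin n → ℂ) :
    SupportedOnLastTwo (θ (Pi.single ⟨n - 1, by omega⟩ 1) z) := by
  have hlast : SupportedOnLastTwo (Pi.single (⟨n - 1, by omega⟩ : Fin n) (1 : ℂ)) :=
    supportedOnLastTwo_single (by simp only; omega) 1
  have h := hder (Pi.single ⟨0, h0⟩ 1) (Pi.single ⟨n - 1, by omega⟩ 1) z
  rw [mu11_eq_zero_of_right _ hlast, map_zero, LinearMap.zero_apply,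
    mu11_eq_zero_of_right _ hlast, zero_add] at h
  intro i hi
  have := congrFun h ⟨i + 1, by omega⟩
  rw [mu11_single_zero_apply, dif_pos (by simp; omega)] at this
  simpa using this.symm

theorem supportedOnLastTwo_apply_single_zero_single_last (hskew : ∀ x y, θ x y = -θ y x)
    (hder : ∀ x y z, θ (mu11 n x y) z = mu11 n (θ x z) y + mu11 n x (θ y z)) (h0 : 0 < n) :
    SupportedOnLastTwo (θ (Pi.single ⟨0, h0⟩ 1) (Pi.single ⟨n - 1, by omega⟩ 1)) := fun i hi => by
  rw [hskew, Pi.neg_apply, supportedOnLastTwo_apply_single_last hder h0 _ i hi, neg_zero]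

theorem apply_single_single_last_eq_zero (hskew : ∀ x y, θ x y = -θ y x)
    (hder : ∀ x y z, θ (mu11 n x y) z = mu11 n (θ x z) y + mu11 n x (θ y z))
    {i : Fin n} (hi1 : 1 ≤ (i : ℕ)) (hi2 : (i : ℕ) + 2 ≤ n) :
    θ (Pi.single i 1) (Pi.single ⟨n - 1, by omega⟩ 1) = 0 :=
  apply_single_eq_zero_of_supportedOnLastTwo hder (by omega)
    (supportedOnLastTwo_apply_single_zero_single_last hskew hder _) i hi1 hi2

theorem apply_eq_delta1n_smul (hskew : ∀ x y, θ x y = -θ y x)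
    (hder : ∀ x y z, θ (mu11 n x y) z = mu11 n (θ x z) y + mu11 n x (θ y z)) (h0 : 0 < n)
    (x y : Fin n → ℂ) :
    θ x y = delta1n h0 x y • θ (Pi.single ⟨0, h0⟩ 1) (Pi.single ⟨n - 1, by omega⟩ 1) := by
  set w := θ (Pi.single ⟨0, h0⟩ 1) (Pi.single ⟨n - 1, by omega⟩ 1)
  have of_low : ∀ i j : Fin n, (i : ℕ) + 2 ≤ n →
      θ (Pi.single i 1) (Pi.single j 1) = delta1n h0 (Pi.single i 1) (Pi.single j 1) • w := by
    intro i j hi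
    by_cases hj : (j : ℕ) + 2 ≤ n
    · rw [apply_single_single_eq_zero hskew hder hi hj, delta1n_single_single, if_neg (by omega),
        if_neg (by omega), sub_zero, zero_smul]
    have hj' : (j : ℕ) = n - 1 := by omega
    rw [delta1n_single_single, if_neg (show ¬((i : ℕ) = n - 1 ∧ (j : ℕ) = 0) by omega), sub_zero,
      show j = ⟨n - 1, by omega⟩ from Fin.ext hj']
    rcases Nat.eq_zero_or_pos i with hi0 | hi0
    · rw [show i = ⟨0, h0⟩ from Fin.ext hi0, if_pos ⟨rfl, rfl⟩, one_smul]
    · rw [apply_single_single_last_eq_zero hskew hder hi0 hi, if_neg (by omega), zero_smul]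
  have key : ∀ i j : Fin n,
      θ (Pi.single i 1) (Pi.single j 1) = delta1n h0 (Pi.single i 1) (Pi.single j 1) • w := by
    intro i j
    by_cases hi : (i : ℕ) + 2 ≤ n
    · exact of_low i j hi
    by_cases hj : (j : ℕ) + 2 ≤ n
    · rw [hskew, of_low j i hj, delta1n_swap, neg_smul, neg_neg]
    · obtain rfl : i = j := Fin.ext (by omega)
      rw [self_eq_neg.mp (hskew _ _), self_eq_neg.mp (delta1n_swap h0 _ _), zero_smul]
  have hθ := LinearMap.ext_basis (Pi.basisFun ℂ (Fin n)) (Pi.basisFun ℂ (Fin n))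
    (B' := (delta1n h0).compr₂ (LinearMap.toSpanSingleton ℂ _ w)) (by simpa using key)
  rw [hθ]
  simp

end Cocycle

section Converse

variable {n : ℕ} (h0 : 0 < n) {θ : (Fin n → ℂ) →ₗ[ℂ] (Fin n → ℂ) →ₗ[ℂ] (Fin n → ℂ)}
  {v : Fin n → ℂ}

theorem skew_of_eq_delta1n_smul (hθ : ∀ x y, θ x y = delta1n h0 x y • v) (x y : Fin n → ℂ) :
    θ x y = -θ y x := by
  rw [hθ, hθ, delta1n_swap h0 x y, neg_smul, neg_neg]

theorem jacobi_of_eq_delta1n_smul (hθ : ∀ x y, θ x y = delta1n h0 x y • v) (hv : v ⟨0, h0⟩ = 0)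
    (x y z : Fin n → ℂ) : θ (θ x y) z + θ (θ y z) x + θ (θ z x) y = 0 := by
  simp only [hθ, map_smul, LinearMap.smul_apply, smul_smul, ← add_smul]
  refine smul_eq_zero.mpr (Or.inl ?_)
  simp only [delta1n_apply, hv]
  ring

theorem leibniz_of_eq_delta1n_smul (hθ : ∀ x y, θ x y = delta1n h0 x y • v)
    (hv : SupportedOnLastTwo v) (x y z : Fin n → ℂ) :
    θ (mu11 n x y) z = mu11 n (θ x z) y + mu11 n x (θ y z) := by
  rw [hθ, hθ, hθ, map_smul, LinearMap.smul_apply, map_smul, mu11_eq_zero_of_left hv,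
    mu11_eq_zero_of_right _ hv, delta1n_apply, mu11_apply_eq_zero _ _ _ (Or.inl rfl),
    mu11_apply_eq_zero _ _ _ (Or.inr (by simp only; omega))]
  simp

end Converse

/-- For n > 3, Z²(μ₁,₁ⁿ, μ₁,₁ⁿ) consists exactly of the maps
`θ(x,y) = α Δ₁ₙ(x,y) e_{n−1} + β Δ₁ₙ(x,y) eₙ` with `α, β ∈ ℂ`. -/
theorem stmt7 (n : ℕ) (hn : 3 < n)
    (θ : (Fin n → ℂ) →ₗ[ℂ] (Fin n → ℂ) →ₗ[ℂ] (Fin n → ℂ)) :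
    ((∀ x y, θ x y = - θ y x) ∧
     (∀ x y z, θ (θ x y) z + θ (θ y z) x + θ (θ z x) y = 0) ∧
     (∀ x y z, θ (mu11 n x y) z = mu11 n (θ x z) y + mu11 n x (θ y z))) ↔
    ∃ α β : ℂ, ∀ x y : Fin n → ℂ,
      θ x y =
        (α * (x ⟨0, by omega⟩ * y ⟨n - 1, by omega⟩ -
              x ⟨n - 1, by omega⟩ * y ⟨0, by omega⟩)) •
            (Pi.single (⟨n - 2, by omega⟩ : Fin n) (1 : ℂ) : Fin n → ℂ) +
        (β * (x ⟨0, by omega⟩ * y ⟨n - 1, by omega⟩ -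
              x ⟨n - 1, by omega⟩ * y ⟨0, by omega⟩)) •
            (Pi.single (⟨n - 1, by omega⟩ : Fin n) (1 : ℂ) : Fin n → ℂ) := by
  have h0 : 0 < n := by omega
  have hform : ∀ (α β : ℂ) (x y : Fin n → ℂ),
      (α * (x ⟨0, h0⟩ * y ⟨n - 1, by omega⟩ - x ⟨n - 1, by omega⟩ * y ⟨0, h0⟩)) •
          (Pi.single ⟨n - 2, by omega⟩ 1 : Fin n → ℂ) +
        (β * (x ⟨0, h0⟩ * y ⟨n - 1, by omega⟩ - x ⟨n - 1, by omega⟩ * y ⟨0, h0⟩)) •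
          Pi.single ⟨n - 1, by omega⟩ 1 =
      delta1n h0 x y • (α • Pi.single ⟨n - 2, by omega⟩ 1 + β • Pi.single ⟨n - 1, by omega⟩ 1) := by
    intro α β x y
    rw [delta1n_apply]
    module
  constructor
  · rintro ⟨hskew, -, hder⟩
    set w := θ (Pi.single ⟨0, h0⟩ 1) (Pi.single ⟨n - 1, by omega⟩ 1)
    have hw := (supportedOnLastTwo_apply_single_zero_single_last hskew hder h0).eq_add (by omega)
    refine ⟨w ⟨n - 2, by omega⟩, w ⟨n - 1, by omega⟩, fun x y => ?_⟩
    rw [hform, ← hw]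
    exact apply_eq_delta1n_smul hskew hder h0 x y
  · rintro ⟨α, β, hθ⟩
    set v : Fin n → ℂ := α • Pi.single ⟨n - 2, by omega⟩ 1 + β • Pi.single ⟨n - 1, by omega⟩ 1
    have hθ' : ∀ x y, θ x y = delta1n h0 x y • v := fun x y => (hθ x y).trans (hform α β x y)
    have hv : SupportedOnLastTwo v := fun i hi => by
      simp only [v, Pi.add_apply, Pi.smul_apply, Pi.single_apply, Fin.ext_iff, smul_eq_mul]
      rw [if_neg (by omega), if_neg (by omega), mul_zero, mul_zero, add_zero]
    exact ⟨skew_of_eq_delta1n_smul h0 hθ',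
      jacobi_of_eq_delta1n_smul h0 hθ' (hv _ (by simp only; omega)),
      leibniz_of_eq_delta1n_smul h0 hθ' hv⟩
end

section
/- Let n ≥ 1 and let φ be a linear endomorphism of the algebra μ₀ⁿ with basis e₁,…,eₙ. Then φ satisfies φ(x·y) = φ(x)·y + x·φ(y) for all x,y if and only if there exist λ₁,…,λₙ ∈ ℂ such that φ(e_i) = i·Σ_{k=i}^{n} λ_{k−i+1} e_k for all 1 ≤ i ≤ n. Consequently, the Lie algebra of derivations of μ₀ⁿ has dimension n. -/
open scoped BigOperators

/-- The Lie algebra (here: submodule) of derivations of the Poisson algebra on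
`Fin n → ℂ` with multiplication `m` and bracket `b`. -/
noncomputable def derivs {n : ℕ}
    (m b : (Fin n → ℂ) →ₗ[ℂ] (Fin n → ℂ) →ₗ[ℂ] (Fin n → ℂ)) :
    Submodule ℂ ((Fin n → ℂ) →ₗ[ℂ] (Fin n → ℂ)) where
  carrier := {φ | (∀ x y, φ (m x y) = m (φ x) y + m x (φ y)) ∧
      (∀ x y, φ (b x y) = b (φ x) y + b x (φ y))}
  add_mem' := by
    rintro φ ψ ⟨h1, h2⟩ ⟨g1, g2⟩
    refine ⟨fun x y => ?_, fun x y => ?_⟩ <;>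
      simp only [LinearMap.add_apply, map_add, h1, h2, g1, g2] <;> abel
  zero_mem' := by
    refine ⟨fun x y => ?_, fun x y => ?_⟩ <;> simp
  smul_mem' := by
    rintro r φ ⟨h1, h2⟩
    refine ⟨fun x y => ?_, fun x y => ?_⟩ <;>
      simp only [LinearMap.smul_apply, map_smul, h1, h2, smul_add]

/-- The multiplication of the null-filiform algebra `μ₀ⁿ`:
`e_i · e_j = e_{i+j}` if `i+j ≤ n`, and `0` if `i+j > n`. -/
noncomputable def mu0 (n : ℕ) : (Fin n → ℂ) →ₗ[ℂ] (Fin n → ℂ) →ₗ[ℂ] (Fin n → ℂ) :=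
  sb (fun a b k => if (a : ℕ) + (b : ℕ) + 1 = (k : ℕ) then 1 else 0)

/-!
`μ₀ⁿ` is the algebra `x ℂ[x] / (x^{n+1})` with `e_i = x^i`; it is generated by `e₁`, and
multiplication by `e₁^j` shifts coordinates up by `j`. By the Leibniz rule a derivation is
therefore determined by `λ = φ(e₁)`, namely `φ(e_i) = i e₁^{i-1} λ`, and conversely for every `λ`
this formula defines a derivation, as one checks on pairs of basis vectors. Hence
`λ ↦ φ_λ` is a linear isomorphism from `ℂⁿ` onto the derivations.
-/

theorem Fin.sum_ite_add_eq {M : Type*} [AddCommMonoid M] {n : ℕ} (j : ℕ) (m : Fin n)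
    (f : Fin n → M) :
    ∑ b : Fin n, (if j + b = m then f b else 0) = if h : j ≤ m then f ⟨m - j, by omega⟩ else 0 := by
  split_ifs with h
  · rw [Finset.sum_eq_single ⟨m - j, by omega⟩
      (fun b _ hb => if_neg fun hb' => hb (by ext; simp; omega)) (by simp)]
    simp only [if_pos (show j + (m - j) = m by omega)]
  · exact Finset.sum_eq_zero fun b _ => if_neg (by omega)

theorem LinearMap.leibniz_of_basis {R M ι : Type*} [CommSemiring R] [AddCommMonoid M]
    [Module R M] (b : Module.Basis ι R M) (m : M →ₗ[R] M →ₗ[R] M) (φ : M →ₗ[R] M)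
    (h : ∀ i j, φ (m (b i) (b j)) = m (φ (b i)) (b j) + m (b i) (φ (b j))) (x y : M) :
    φ (m x y) = m (φ x) y + m x (φ y) := by
  have : m.compr₂ φ = m ∘ₗ φ + m.compl₂ φ := LinearMap.ext_basis b b h
  exact LinearMap.congr_fun₂ this x y

theorem mem_derivs_zero_iff {n : ℕ} (m : (Fin n → ℂ) →ₗ[ℂ] (Fin n → ℂ) →ₗ[ℂ] (Fin n → ℂ))
    (φ : (Fin n → ℂ) →ₗ[ℂ] (Fin n → ℂ)) :
    φ ∈ derivs m 0 ↔ ∀ x y, φ (m x y) = m (φ x) y + m x (φ y) :=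
  ⟨And.left, fun h => ⟨h, by simp⟩⟩

namespace NullFiliform

section Shift

variable {R : Type*} [Semiring R] {n : ℕ}

/-- The basis vector `e_{j+1}` of `Fin n → R` indexed by a natural number; it is `0` when
`n ≤ j`, which is what makes `e_a e_b = e_{a+b+1}` hold without a case split. -/
def natSingle (n j : ℕ) : Fin n → R := fun m => if (m : ℕ) = j then 1 else 0

theorem natSingle_coe (a : Fin n) : natSingle n a = (Pi.single a 1 : Fin n → R) := by
  ext m
  simp [natSingle, Pi.single_apply, Fin.val_inj]

theorem natSingle_of_le {j : ℕ} (h : n ≤ j) : natSingle n j = (0 : Fin n → R) := by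
  ext m
  simp [natSingle, show (m : ℕ) ≠ j by omega]

def shiftUp (j : ℕ) : (Fin n → R) →ₗ[R] (Fin n → R) where
  toFun x m := if h : j ≤ m then x ⟨m - j, by omega⟩ else 0
  map_add' x y := by ext m; split_ifs <;> simp [*]
  map_smul' c x := by ext m; split_ifs <;> simp [*]

theorem shiftUp_apply (j : ℕ) (x : Fin n → R) (m : Fin n) :
    shiftUp j x m = if h : j ≤ m then x ⟨m - j, by omega⟩ else 0 := rfl

theorem shiftUp_zero (x : Fin n → R) : shiftUp 0 x = x := by
  ext m
  simp [shiftUp_apply]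

theorem shiftUp_shiftUp (i j : ℕ) (x : Fin n → R) :
    shiftUp i (shiftUp j x) = shiftUp (i + j) x := by
  ext m
  simp only [shiftUp_apply]
  split_ifs <;> first | omega | rfl | congr 2; omega

theorem shiftUp_of_le {j : ℕ} (h : n ≤ j) (x : Fin n → R) : shiftUp j x = 0 := by
  ext m
  simp [shiftUp_apply, show ¬ j ≤ m by omega]

theorem shiftUp_natSingle (i j : ℕ) :
    shiftUp i (natSingle n j : Fin n → R) = natSingle n (i + j) := by
  ext m
  simp only [shiftUp_apply, natSingle]
  split_ifs <;> first | rfl | omega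

theorem shiftUp_eq_sum_smul_single (j : ℕ) (x : Fin n → R) :
    shiftUp j x = ∑ k : Fin n, (if h : j ≤ k then x ⟨k - j, by omega⟩ else 0) •
      (Pi.single k 1 : Fin n → R) :=
  pi_eq_sum_univ' _

end Shift

variable {n : ℕ}

theorem mu0_apply (x y : Fin n → ℂ) (k : Fin n) :
    mu0 n x y k = ∑ a : Fin n, ∑ b : Fin n,
      (if (a : ℕ) + b + 1 = k then 1 else 0) * (x a * y b) := rfl

theorem mu0_comm (x y : Fin n → ℂ) : mu0 n x y = mu0 n y x := by
  ext k
  rw [mu0_apply, mu0_apply, Finset.sum_comm]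
  refine Finset.sum_congr rfl fun b _ => Finset.sum_congr rfl fun a _ => ?_
  rw [add_comm (b : ℕ), mul_comm (x a)]

theorem mu0_eq_sum_smul_shiftUp (x y : Fin n → ℂ) :
    mu0 n x y = ∑ a, x a • shiftUp (a + 1) y := by
  ext m
  simp only [mu0_apply, Finset.sum_apply, Pi.smul_apply, smul_eq_mul, shiftUp_apply]
  refine Finset.sum_congr rfl fun a _ => ?_
  simp only [ite_mul, one_mul, zero_mul, add_right_comm (a : ℕ) _ 1]
  rw [Fin.sum_ite_add_eq, mul_dite, mul_zero]

theorem mu0_natSingle_left (a : ℕ) (y : Fin n → ℂ) :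
    mu0 n (natSingle n a) y = shiftUp (a + 1) y := by
  rcases lt_or_ge a n with h | h
  · rw [show a = (⟨a, h⟩ : Fin n) from rfl, natSingle_coe, mu0_eq_sum_smul_shiftUp]
    simp [Pi.single_apply, ite_smul]
  · rw [natSingle_of_le h, map_zero, LinearMap.zero_apply, shiftUp_of_le (by omega)]

theorem mu0_natSingle_right (x : Fin n → ℂ) (b : ℕ) :
    mu0 n x (natSingle n b) = shiftUp (b + 1) x := by
  rw [mu0_comm, mu0_natSingle_left]

theorem mu0_natSingle_natSingle (a b : ℕ) :
    mu0 n (natSingle n a) (natSingle n b) = natSingle n (a + b + 1) := by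
  rw [mu0_natSingle_left, shiftUp_natSingle, add_right_comm]

variable (n) in
noncomputable def mu0Derivation : (Fin n → ℂ) →ₗ[ℂ] Module.End ℂ (Fin n → ℂ) :=
  ((Pi.basisFun ℂ (Fin n)).constr ℂ).toLinearMap ∘ₗ
    LinearMap.pi fun a : Fin n => (((a : ℕ) + 1 : ℕ) : ℂ) • shiftUp a

theorem mu0Derivation_natSingle (lam : Fin n → ℂ) (j : ℕ) :
    mu0Derivation n lam (natSingle n j) = ((j + 1 : ℕ) : ℂ) • shiftUp j lam := by
  rcases lt_or_ge j n with h | h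
  · rw [show j = (⟨j, h⟩ : Fin n) from rfl, natSingle_coe, ← Pi.basisFun_apply ℂ]
    simp [mu0Derivation]
  · rw [natSingle_of_le h, map_zero, shiftUp_of_le h, smul_zero]

theorem mu0Derivation_mem_derivs (lam : Fin n → ℂ) :
    mu0Derivation n lam ∈ derivs (mu0 n) 0 := by
  rw [mem_derivs_zero_iff]
  refine LinearMap.leibniz_of_basis (Pi.basisFun ℂ (Fin n)) _ _ fun a b => ?_
  simp only [Pi.basisFun_apply, ← natSingle_coe]
  rw [mu0_natSingle_natSingle, mu0Derivation_natSingle, mu0Derivation_natSingle,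
    mu0Derivation_natSingle, LinearMap.map_smul₂, map_smul, mu0_natSingle_right,
    mu0_natSingle_left, shiftUp_shiftUp, shiftUp_shiftUp,
    show (b : ℕ) + 1 + a = a + b + 1 by omega, show (a : ℕ) + 1 + b = a + b + 1 by omega,
    ← add_smul]
  congr 1
  push_cast
  ring

theorem apply_natSingle_of_mem_derivs {φ : Module.End ℂ (Fin n → ℂ)}
    (h : φ ∈ derivs (mu0 n) 0) (j : ℕ) :
    φ (natSingle n j) = ((j + 1 : ℕ) : ℂ) • shiftUp j (φ (natSingle n 0)) := by
  induction j with
  | zero => simp [shiftUp_zero]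
  | succ j ih =>
    rw [← mu0_natSingle_natSingle j 0, (mem_derivs_zero_iff _ _).1 h, ih,
      mu0_natSingle_right, mu0_natSingle_left, map_smul, shiftUp_shiftUp, zero_add,
      add_comm 1 j, Nat.cast_succ (j + 1), add_smul, one_smul]

theorem eq_mu0Derivation_of_mem_derivs {φ : Module.End ℂ (Fin n → ℂ)}
    (h : φ ∈ derivs (mu0 n) 0) : φ = mu0Derivation n (φ (natSingle n 0)) :=
  (Pi.basisFun ℂ (Fin n)).ext fun a => by
    rw [Pi.basisFun_apply, ← natSingle_coe, apply_natSingle_of_mem_derivs h,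
      mu0Derivation_natSingle]

theorem mu0Derivation_injective : Function.Injective (mu0Derivation n) := by
  refine (injective_iff_map_eq_zero _).2 fun lam h => ?_
  simpa [mu0Derivation_natSingle, shiftUp_zero] using congr($h (natSingle n 0))

theorem derivs_mu0_eq_range : derivs (mu0 n) 0 = LinearMap.range (mu0Derivation n) := by
  ext φ
  refine ⟨fun h => ⟨_, (eq_mu0Derivation_of_mem_derivs h).symm⟩, ?_⟩
  rintro ⟨lam, rfl⟩
  exact mu0Derivation_mem_derivs lam

theorem mem_derivs_mu0_iff (φ : Module.End ℂ (Fin n → ℂ)) :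
    φ ∈ derivs (mu0 n) 0 ↔
      ∃ lam : Fin n → ℂ, ∀ a : Fin n, φ (Pi.single a 1) = ((a + 1 : ℕ) : ℂ) • shiftUp a lam := by
  rw [derivs_mu0_eq_range]
  refine ⟨fun ⟨lam, hlam⟩ => ⟨lam, fun a => ?_⟩, fun ⟨lam, hlam⟩ => ⟨lam, ?_⟩⟩
  · rw [← hlam, ← natSingle_coe, mu0Derivation_natSingle]
  · exact (Pi.basisFun ℂ (Fin n)).ext fun a => by
      rw [Pi.basisFun_apply, hlam, ← natSingle_coe, mu0Derivation_natSingle]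

theorem finrank_derivs_mu0 : Module.finrank ℂ (derivs (mu0 n) 0) = n := by
  rw [derivs_mu0_eq_range, LinearMap.finrank_range_of_inj mu0Derivation_injective,
    Module.finrank_fin_fun]

end NullFiliform

theorem stmt10_general (n : ℕ) :
    (∀ φ : (Fin n → ℂ) →ₗ[ℂ] (Fin n → ℂ),
      (∀ x y, φ (mu0 n x y) = mu0 n (φ x) y + mu0 n x (φ y)) ↔
      ∃ lam : Fin n → ℂ, ∀ a : Fin n,
        φ (Pi.single a 1) = (((a : ℕ) + 1 : ℕ) : ℂ) •
          ∑ k : Fin n,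
            (if h : (a : ℕ) ≤ (k : ℕ) then
                lam ⟨(k : ℕ) - (a : ℕ), lt_of_le_of_lt (Nat.sub_le _ _) k.isLt⟩
              else 0) • (Pi.single k (1 : ℂ) : Fin n → ℂ)) ∧
    Module.finrank ℂ ↥(derivs (mu0 n) 0) = n := by
  refine ⟨fun φ => ?_, NullFiliform.finrank_derivs_mu0⟩
  simp only [← NullFiliform.shiftUp_eq_sum_smul_single]
  rw [← mem_derivs_zero_iff, NullFiliform.mem_derivs_mu0_iff]

/-- A linear endomorphism `φ` of `μ₀ⁿ` is a derivation iff there are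
`λ₁,…,λₙ ∈ ℂ` with `φ(e_i) = i • ∑_{k=i}^{n} λ_{k−i+1} e_k`; consequently the
Lie algebra of derivations of `μ₀ⁿ` has dimension `n`. -/
theorem stmt10 (n : ℕ) (hn : 1 ≤ n) :
    (∀ φ : (Fin n → ℂ) →ₗ[ℂ] (Fin n → ℂ),
      (∀ x y, φ (mu0 n x y) = mu0 n (φ x) y + mu0 n x (φ y)) ↔
      ∃ lam : Fin n → ℂ, ∀ a : Fin n,
        φ (Pi.single a 1) = (((a : ℕ) + 1 : ℕ) : ℂ) •
          ∑ k : Fin n,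
            (if h : (a : ℕ) ≤ (k : ℕ) then
                lam ⟨(k : ℕ) - (a : ℕ), lt_of_le_of_lt (Nat.sub_le _ _) k.isLt⟩
              else 0) • (Pi.single k (1 : ℂ) : Fin n → ℂ)) ∧
    Module.finrank ℂ ↥(derivs (mu0 n) 0) = n :=
  stmt10_general n
end

section
/- Let n > 3. The Poisson algebra P₁,₅ⁿ degenerates to the Poisson algebra P₁,₄ⁿ: there exists a family g(t), t ∈ ℂ∖{0}, of invertible linear maps of ℂⁿ such that for all x, y ∈ ℂⁿ, g(t)(μ(g(t)⁻¹x, g(t)⁻¹y)) → λ(x,y) and g(t)(μ'(g(t)⁻¹x, g(t)⁻¹y)) → λ'(x,y) as t → 0 (in the standard topology of ℂⁿ), where (μ, μ') are the multiplication and bracket of P₁,₅ⁿ and (λ, λ') those of P₁,₄ⁿ. -/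
open scoped BigOperators

/-- Multiplication of `P₁,₄ⁿ` and `P₁,₅ⁿ`: `e_i · e_j = e_{i+j}` for
`2 ≤ i+j ≤ n−1`, `i,j ≤ n−1`, together with `eₙ·eₙ = e_{n−1}`. -/
noncomputable def mu12 (n : ℕ) : (Fin n → ℂ) →ₗ[ℂ] (Fin n → ℂ) →ₗ[ℂ] (Fin n → ℂ) :=
  sb (fun a b k =>
    (if (a : ℕ) + (b : ℕ) + 1 = (k : ℕ) ∧ (k : ℕ) + 2 ≤ n then 1 else 0) +
    (if (a : ℕ) + 1 = n ∧ (b : ℕ) + 1 = n ∧ (k : ℕ) + 2 = n then 1 else 0))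

/-- The bracket of `P₁,₅ⁿ`: `{e₁,eₙ} = e_{n−1}`. -/
noncomputable def brB (n : ℕ) : (Fin n → ℂ) →ₗ[ℂ] (Fin n → ℂ) →ₗ[ℂ] (Fin n → ℂ) :=
  sb (fun a b k =>
    if (a : ℕ) = 0 ∧ (b : ℕ) + 1 = n ∧ (k : ℕ) + 2 = n then 1
    else if (a : ℕ) + 1 = n ∧ (b : ℕ) = 0 ∧ (k : ℕ) + 2 = n then -1 else 0)

/-! Grade `ℂⁿ` by giving `e_i` weight `2i` for `i < n` and `eₙ` weight `n − 1`. Every product of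
`P₁,₅ⁿ` is homogeneous of degree `0`, while its bracket `{e₁,eₙ} = e_{n−1}` raises the weight by
`n − 3 > 0`. Conjugating by the diagonal scaling `e_i ↦ t^{wᵢ} e_i` therefore leaves the
multiplication unchanged and multiplies the bracket by `t^{n−3}`, which tends to `0`. -/

open Filter Topology

noncomputable def weightScaling {n : ℕ} (w : Fin n → ℕ) (t : ℂˣ) :
    (Fin n → ℂ) ≃ₗ[ℂ] (Fin n → ℂ) :=
  LinearEquiv.piCongrRight fun i => (LinearEquiv.smulOfUnit (t ^ w i) : ℂ ≃ₗ[ℂ] ℂ)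

theorem weightScaling_sb {n : ℕ} {c : Fin n → Fin n → Fin n → ℂ} {w : Fin n → ℕ} {d : ℕ}
    (hc : ∀ a b k, c a b k ≠ 0 → w k = d + w a + w b) (t : ℂˣ) (x y : Fin n → ℂ) :
    weightScaling w t (sb c ((weightScaling w t).symm x) ((weightScaling w t).symm y))
      = (t : ℂ) ^ d • sb c x y := by
  funext k
  simp only [weightScaling, LinearEquiv.piCongrRight_symm, LinearEquiv.piCongrRight_apply, sb,
    LinearMap.mk₂_apply, Pi.smul_apply, LinearEquiv.smulOfUnit, DistribMulAction.toLinearEquiv_apply,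
    DistribMulAction.toLinearEquiv_symm_apply, Units.smul_def, Units.val_pow_eq_pow_val,
    Units.val_inv_eq_inv_val, smul_eq_mul, Finset.mul_sum]
  refine Finset.sum_congr rfl fun a _ => Finset.sum_congr rfl fun b _ => ?_
  by_cases h : c a b k = 0
  · simp [h]
  · rw [hc a b k h, pow_add, pow_add]
    field_simp

/-- Indices are 0-based: `poissonWeight n i` is the weight of `e_{i+1}`. -/
def poissonWeight (n : ℕ) (i : Fin n) : ℕ :=
  if (i : ℕ) + 1 = n then n - 1 else 2 * ((i : ℕ) + 1)

theorem weightScaling_mu12 {n : ℕ} (t : ℂˣ) (x y : Fin n → ℂ) :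
    weightScaling (poissonWeight n) t
        (mu12 n ((weightScaling (poissonWeight n) t).symm x)
          ((weightScaling (poissonWeight n) t).symm y)) = mu12 n x y := by
  unfold mu12
  rw [weightScaling_sb (d := 0) ?_ t x y, pow_zero, one_smul]
  intro a b k hc
  simp only [poissonWeight]
  split_ifs at hc ⊢ <;> first | omega | simp at hc

theorem weightScaling_brB {n : ℕ} (hn : 3 ≤ n) (t : ℂˣ) (x y : Fin n → ℂ) :
    weightScaling (poissonWeight n) t
        (brB n ((weightScaling (poissonWeight n) t).symm x)
          ((weightScaling (poissonWeight n) t).symm y)) = (t : ℂ) ^ (n - 3) • brB n x y := by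
  unfold brB
  refine weightScaling_sb (fun a b k hc => ?_) t x y
  simp only [poissonWeight]
  split_ifs at hc ⊢ <;> first | omega | simp at hc

/-- For n > 3, the Poisson algebra `P₁,₅ⁿ` degenerates to `P₁,₄ⁿ`
(same multiplication, zero bracket). -/
theorem stmt16 (n : ℕ) (hn : 3 < n) :
    ∃ g : ℂ → ((Fin n → ℂ) ≃ₗ[ℂ] (Fin n → ℂ)), ∀ x y : Fin n → ℂ,
      Filter.Tendsto (fun t : ℂ => g t (mu12 n ((g t).symm x) ((g t).symm y)))
        (nhdsWithin (0 : ℂ) {(0 : ℂ)}ᶜ) (nhds (mu12 n x y)) ∧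
      Filter.Tendsto (fun t : ℂ => g t (brB n ((g t).symm x) ((g t).symm y)))
        (nhdsWithin (0 : ℂ) {(0 : ℂ)}ᶜ) (nhds ((0 : (Fin n → ℂ) →ₗ[ℂ] (Fin n → ℂ) →ₗ[ℂ] (Fin n → ℂ)) x y)) := by
  have hne : ∀ᶠ t in 𝓝[≠] (0 : ℂ), t ≠ 0 := eventually_mem_nhdsWithin
  refine ⟨fun t => if ht : t = 0 then LinearEquiv.refl ℂ _
    else weightScaling (poissonWeight n) (Units.mk0 t ht), fun x y => ⟨?_, ?_⟩⟩
  · refine tendsto_const_nhds.congr' (hne.mono fun t ht => ?_)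
    simp only [dif_neg ht, weightScaling_mu12]
  · have hpow : Tendsto (fun t : ℂ => t ^ (n - 3)) (𝓝[≠] 0) (𝓝 0) :=
      ((continuous_pow (n - 3)).tendsto' 0 0 (zero_pow (by omega))).mono_left nhdsWithin_le_nhds
    rw [LinearMap.zero_apply, LinearMap.zero_apply, ← zero_smul ℂ (brB n x y)]
    refine (hpow.smul_const (brB n x y)).congr' (hne.mono fun t ht => ?_)
    simp only [dif_neg ht, weightScaling_brB hn.le, Units.val_mk0]
end

section
/- The Poisson algebra P₃,₅ degenerates to the Poisson algebra P₃,₄^{−1}: there exists a family g(t), t ∈ ℂ∖{0}, of invertible linear maps of ℂ³ such that for all x, y ∈ ℂ³, g(t)(μ'(g(t)⁻¹x, g(t)⁻¹y)) → λ'(x,y) as t → 0 (in the standard topology of ℂ³), where μ' is the bracket of P₃,₅ and λ' is the bracket of P₃,₄^{−1} (both algebras have zero associative multiplication). -/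
open scoped BigOperators

/-- Structure constants of the bracket of `P₃,₅`:
`{e₁,e₂}=e₃`, `{e₁,e₃}=−2e₁`, `{e₂,e₃}=2e₂`. -/
def cb5 : Fin 3 → Fin 3 → Fin 3 → ℂ :=
  ![![![0,0,0],![0,0,1],![-2,0,0]], ![![0,0,-1],![0,0,0],![0,2,0]], ![![2,0,0],![0,-2,0],![0,0,0]]]

/-- Structure constants of the bracket of `P₃,₄^{−1}`:
`{e₁,e₂}=e₂`, `{e₁,e₃}=−e₃`. -/
def cb4m1 : Fin 3 → Fin 3 → Fin 3 → ℂ :=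
  ![![![0,0,0],![0,1,0],![0,0,-1]], ![![0,-1,0],![0,0,0],![0,0,0]], ![![0,0,1],![0,0,0],![0,0,0]]]

noncomputable def Emap (t : ℂ) : (Fin 3 → ℂ) →ₗ[ℂ] (Fin 3 → ℂ) where
  toFun y := ![2 * y 2, y 0 / t, y 1]
  map_add' a b := by
    funext i; fin_cases i <;> simp <;> ring
  map_smul' r a := by
    funext i; fin_cases i <;> simp <;> ring

noncomputable def Einv (t : ℂ) : (Fin 3 → ℂ) →ₗ[ℂ] (Fin 3 → ℂ) where
  toFun x := ![t * x 1, x 2, x 0 / 2]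
  map_add' a b := by
    funext i; fin_cases i <;> simp <;> ring
  map_smul' r a := by
    funext i; fin_cases i <;> simp <;> ring

noncomputable def E (t : ℂ) (ht : t ≠ 0) : (Fin 3 → ℂ) ≃ₗ[ℂ] (Fin 3 → ℂ) :=
  LinearEquiv.ofLinear (Emap t) (Einv t)
    (by
      apply LinearMap.ext; intro x; funext i
      fin_cases i <;> simp [Emap, Einv] <;> field_simp)
    (by
      apply LinearMap.ext; intro x; funext i
      fin_cases i <;> simp [Emap, Einv] <;> field_simp <;> ring)

/-- The Poisson algebra `P₃,₅` degenerates to `P₃,₄^{−1}` (both have zero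
associative multiplication). -/
theorem stmt18 :
    ∃ g : ℂ → ((Fin 3 → ℂ) ≃ₗ[ℂ] (Fin 3 → ℂ)), ∀ x y : Fin 3 → ℂ,
      Filter.Tendsto (fun t : ℂ => g t (sb cb5 ((g t).symm x) ((g t).symm y)))
        (nhdsWithin (0 : ℂ) {(0 : ℂ)}ᶜ) (nhds (sb cb4m1 x y)) := by
  refine ⟨fun t => if h : t = 0 then LinearEquiv.refl ℂ _ else E t h, fun x y => ?_⟩
  have key : ∀ t : ℂ, t ≠ 0 →
      (if h : t = 0 then LinearEquiv.refl ℂ (Fin 3 → ℂ) else E t h)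
        (sb cb5 (((if h : t = 0 then LinearEquiv.refl ℂ (Fin 3 → ℂ) else E t h)).symm x)
          (((if h : t = 0 then LinearEquiv.refl ℂ (Fin 3 → ℂ) else E t h)).symm y)) =
      sb cb4m1 x y + t • ![2 * (x 1 * y 2 - x 2 * y 1), 0, 0] := by
    intro t ht
    rw [dif_neg ht]
    funext k
    fin_cases k <;>
      simp [E, Emap, Einv, sb, cb5, cb4m1, Fin.sum_univ_three, LinearEquiv.ofLinear_symm_apply,
        Matrix.vecHead, Matrix.vecTail] <;>
      (try field_simp) <;> (try ring)
  have hcong : (fun t : ℂ => (if h : t = 0 then LinearEquiv.refl ℂ (Fin 3 → ℂ) else E t h)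
        (sb cb5 (((if h : t = 0 then LinearEquiv.refl ℂ (Fin 3 → ℂ) else E t h)).symm x)
          (((if h : t = 0 then LinearEquiv.refl ℂ (Fin 3 → ℂ) else E t h)).symm y)))
      =ᶠ[nhdsWithin (0 : ℂ) {(0 : ℂ)}ᶜ]
      (fun t : ℂ => sb cb4m1 x y + t • ![2 * (x 1 * y 2 - x 2 * y 1), 0, 0]) := by
    filter_upwards [self_mem_nhdsWithin] with t ht
    exact key t ht
  refine Filter.Tendsto.congr' hcong.symm ?_
  have : Filter.Tendsto (fun t : ℂ => sb cb4m1 x y + t • ![2 * (x 1 * y 2 - x 2 * y 1), 0, 0])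
      (nhds (0 : ℂ)) (nhds (sb cb4m1 x y)) := by
    have h1 : Filter.Tendsto (fun t : ℂ => t • ![2 * (x 1 * y 2 - x 2 * y 1), 0, 0])
        (nhds (0 : ℂ)) (nhds ((0:ℂ) • ![2 * (x 1 * y 2 - x 2 * y 1), 0, 0])) :=
      Filter.Tendsto.smul_const Filter.tendsto_id _
    simpa using tendsto_const_nhds.add h1
  exact this.mono_left nhdsWithin_le_nhds
end
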